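/- Let L = p^{-1}Z_p ⊕ Z_p ⊕ Z_p ⊕ Z_p with the standard symplectic pairing. If x ∈ L is a primitive element of type (I) and y ∈ L is a primitive element of type (II), then the Z_p-submodule of L generated by x and y is a direct summand of L of rank 2. -/

import Mathlib

/-!
A type (I) vector `x` has a unit coordinate `x i` with `i ∈ {0, 3}`, since otherwise all its
pairings are integral; a type (II) vector `y` has `y 0, y 3 ∈ pℤ_p` and some unit coordinate `y j`.
So the minor `x i * y j - y i * x j` is a unit, and whenever two linear forms have a unit
`2 × 2` minor on `x, y`, Cramer's rule splits the module as `span {x, y} ⊕ (ker f ⊓ ker g)`.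
-/

/-- The paramodular lattice `L = p⁻¹ℤ_p ⊕ ℤ_p ⊕ ℤ_p ⊕ ℤ_p ⊆ ℚ_p⁴` is identified with `ℤ_p⁴`
via `(a,b,c,d) ↦ (p⁻¹a, b, c, d)`.  Under this identification the standard symplectic pairing
`⟨x,y⟩ = x₁y₄ + x₂y₃ − x₃y₂ − x₄y₁` becomes the following `ℚ_p`-valued pairing on `ℤ_p⁴`. -/
noncomputable def spPara (p : ℕ) [Fact p.Prime] (u v : Fin 4 → ℤ_[p]) : ℚ_[p] :=
  ((u 0 * v 3 : ℤ_[p]) : ℚ_[p]) / (p : ℚ_[p]) + ((u 1 * v 2 : ℤ_[p]) : ℚ_[p])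
    - ((u 2 * v 1 : ℤ_[p]) : ℚ_[p]) - ((u 3 * v 0 : ℤ_[p]) : ℚ_[p]) / (p : ℚ_[p])

/-- `x ∈ L` is primitive if `x ∉ pL`. -/
def ParaPrimitive (p : ℕ) [Fact p.Prime] (x : Fin 4 → ℤ_[p]) : Prop :=
  ¬ ∀ i, (p : ℤ_[p]) ∣ x i

/-- A primitive element of type (I): `⟨x,y⟩ ∈ p⁻¹ℤ_p ∖ ℤ_p` for some `y ∈ L`. -/
def PrimTypeI (p : ℕ) [Fact p.Prime] (x : Fin 4 → ℤ_[p]) : Prop :=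
  ParaPrimitive p x ∧ ∃ y : Fin 4 → ℤ_[p], ¬ ‖spPara p x y‖ ≤ 1

/-- A primitive element of type (II): `⟨x,y⟩ ∈ ℤ_p` for every `y ∈ L`. -/
def PrimTypeII (p : ℕ) [Fact p.Prime] (x : Fin 4 → ℤ_[p]) : Prop :=
  ParaPrimitive p x ∧ ∀ y : Fin 4 → ℤ_[p], ‖spPara p x y‖ ≤ 1

section PairComplement

variable {R M : Type*} [CommRing R] [AddCommGroup M] [Module R M]

open Submodule

theorem eq_zero_of_map_smul_add_smul_eq_zero {x y : M} {f g : M →ₗ[R] R}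
    (hfg : IsUnit (f x * g y - f y * g x)) {s t : R}
    (hf : f (s • x + t • y) = 0) (hg : g (s • x + t • y) = 0) : s = 0 ∧ t = 0 := by
  simp only [map_add, map_smul, smul_eq_mul] at hf hg
  constructor
  · refine hfg.mul_left_eq_zero.1 ?_
    linear_combination g y * hf - f y * hg
  · refine hfg.mul_left_eq_zero.1 ?_
    linear_combination f x * hg - g x * hf

theorem linearIndependent_pair_of_isUnit_det {x y : M} {f g : M →ₗ[R] R}
    (hfg : IsUnit (f x * g y - f y * g x)) : LinearIndependent R ![x, y] :=
  LinearIndependent.pair_iff.2 fun s t hst =>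
    eq_zero_of_map_smul_add_smul_eq_zero hfg (by rw [hst, map_zero]) (by rw [hst, map_zero])

-- `s`, `t` are given by Cramer's rule.
theorem exists_sub_smul_add_smul_mem_ker_inf {x y : M} {f g : M →ₗ[R] R}
    (hfg : IsUnit (f x * g y - f y * g x)) (v : M) :
    ∃ s t : R, v - (s • x + t • y) ∈ LinearMap.ker f ⊓ LinearMap.ker g := by
  obtain ⟨u, hu⟩ := hfg.exists_left_inv
  refine ⟨u * (g y * f v - f y * g v), u * (f x * g v - g x * f v), ?_, ?_⟩ <;>
    simp only [SetLike.mem_coe, LinearMap.mem_ker, map_sub, map_add, map_smul, smul_eq_mul]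
  · linear_combination (-(f v) * hu)
  · linear_combination (-(g v) * hu)

theorem isCompl_span_pair_ker_inf {x y : M} {f g : M →ₗ[R] R}
    (hfg : IsUnit (f x * g y - f y * g x)) :
    IsCompl (span R {x, y}) (LinearMap.ker f ⊓ LinearMap.ker g) := by
  constructor
  · rw [disjoint_def]
    rintro v hv ⟨hfv, hgv⟩
    obtain ⟨s, t, rfl⟩ := mem_span_pair.1 hv
    obtain ⟨rfl, rfl⟩ := eq_zero_of_map_smul_add_smul_eq_zero hfg hfv hgv
    simp
  · rw [codisjoint_iff, eq_top_iff']
    intro v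
    obtain ⟨s, t, hst⟩ := exists_sub_smul_add_smul_mem_ker_inf hfg v
    simpa using add_mem_sup (mem_span_pair.2 ⟨s, t, rfl⟩ : s • x + t • y ∈ span R {x, y}) hst

end PairComplement

namespace PadicInt

variable {p : ℕ} [Fact p.Prime]

theorem isUnit_of_not_dvd {z : ℤ_[p]} (h : ¬ (p : ℤ_[p]) ∣ z) : IsUnit z :=
  not_not.1 fun hz => h ((norm_lt_one_iff_dvd z).1 (not_isUnit_iff.1 hz))

theorem isUnit_mul_sub_mul_of_dvd {a b c d : ℤ_[p]} (ha : ¬ (p : ℤ_[p]) ∣ a)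
    (hb : ¬ (p : ℤ_[p]) ∣ b) (hc : (p : ℤ_[p]) ∣ c) : IsUnit (a * b - c * d) :=
  isUnit_of_not_dvd <| by
    rw [dvd_sub_left (hc.mul_right d)]
    exact prime_p.not_dvd_mul ha hb

theorem dvd_of_norm_div_le_one {z : ℤ_[p]} (h : ‖(z : ℚ_[p]) / p‖ ≤ 1) : (p : ℤ_[p]) ∣ z := by
  have hp : (1 : ℝ) < p := by exact_mod_cast (Fact.out : p.Prime).one_lt
  rw [norm_div, Padic.norm_p, div_le_one (by positivity)] at h
  rw [← norm_lt_one_iff_dvd, norm_def]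
  exact h.trans_lt (inv_lt_one_of_one_lt₀ hp)

end PadicInt

section Paramodular

variable {p : ℕ} [Fact p.Prime] {x y : Fin 4 → ℤ_[p]}

theorem norm_spPara_le_one_of_dvd (h0 : (p : ℤ_[p]) ∣ x 0) (h3 : (p : ℤ_[p]) ∣ x 3)
    (v : Fin 4 → ℤ_[p]) : ‖spPara p x v‖ ≤ 1 := by
  obtain ⟨a, ha⟩ := h0
  obtain ⟨b, hb⟩ := h3
  have hp : (p : ℚ_[p]) ≠ 0 := by exact_mod_cast (Fact.out : p.Prime).ne_zero
  have hint : spPara p x v = ((a * v 3 + x 1 * v 2 - x 2 * v 1 - b * v 0 : ℤ_[p]) : ℚ_[p]) := by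
    simp only [spPara, ha, hb]
    push_cast
    field_simp
  rw [hint, ← PadicInt.norm_def]
  exact PadicInt.norm_le_one _

theorem PrimTypeI.exists_not_dvd (hx : PrimTypeI p x) :
    ∃ i, (i = 0 ∨ i = 3) ∧ ¬ (p : ℤ_[p]) ∣ x i := by
  obtain ⟨-, v, hv⟩ := hx
  by_contra! h
  exact hv (norm_spPara_le_one_of_dvd (h 0 (.inl rfl)) (h 3 (.inr rfl)) v)

theorem PrimTypeII.dvd_of_eq_zero_or_eq_three (hy : PrimTypeII p y) {i : Fin 4}
    (hi : i = 0 ∨ i = 3) : (p : ℤ_[p]) ∣ y i := by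
  apply PadicInt.dvd_of_norm_div_le_one
  rcases hi with rfl | rfl
  · simpa [spPara] using hy.2 ![0, 0, 0, 1]
  · simpa [spPara] using hy.2 ![1, 0, 0, 0]

end Paramodular

theorem typeI_typeII_span_direct_summand
    (p : ℕ) [Fact p.Prime] (x y : Fin 4 → ℤ_[p])
    (hx : PrimTypeI p x) (hy : PrimTypeII p y) :
    (∃ J : Submodule ℤ_[p] (Fin 4 → ℤ_[p]),
        IsCompl (Submodule.span ℤ_[p] {x, y}) J) ∧
    LinearIndependent ℤ_[p] ![x, y] := by
  obtain ⟨i, hi, hxi⟩ := hx.exists_not_dvd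
  obtain ⟨j, hyj⟩ := not_forall.1 hy.1
  have hdet : IsUnit (x i * y j - y i * x j) :=
    PadicInt.isUnit_mul_sub_mul_of_dvd hxi hyj (hy.dvd_of_eq_zero_or_eq_three hi)
  exact ⟨⟨_, isCompl_span_pair_ker_inf (f := LinearMap.proj i) (g := LinearMap.proj j) hdet⟩,
    linearIndependent_pair_of_isUnit_det (f := LinearMap.proj i) (g := LinearMap.proj j) hdet⟩
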